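/- In the latent Gaussian model, let f̂ be the RF-ind Vecchia approximation of x = (z_o, y): f̂(x) = (∏_{i∈o} f(z_i | z_{g(i)})) · ∏_{i=1}^n f(y_i | z_{q_z(i)}), where g(i) ⊆ o consists of indices ordered before i and q_z(i) ⊆ o for every i (each latent variable conditions only on observed responses). Then the implied posterior predictive distribution factorizes as f̂(y | z_o) = ∏_{i=1}^n f(y_i | z_{q_z(i)}); that is, under f̂, given z_o the components of y are independent, with y_i | z_o distributed as the exact local-kriging conditional N(E(y_i | z_{q_z(i)}), Var(y_i | z_{q_z(i)})). In particular, the matrix W = Q_{ℓℓ} (the y-block of the precision matrix of f̂) is diagonal with W_{ii} = 1/Var(y_i | z_{q_z(i)}). -/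

import Mathlib

open MeasureTheory Real Finset Matrix

noncomputable section

/-- Density of the one-dimensional normal distribution `N(μ, v)` evaluated at `t`. -/
def gauss1 (μ v t : ℝ) : ℝ :=
  (Real.sqrt (2 * π * v))⁻¹ * Real.exp (-((t - μ) ^ 2) / (2 * v))

variable {ι : Type*} [Fintype ι] [DecidableEq ι]

/-- Joint density of the multivariate normal distribution `N(μ, K)` on `ι → ℝ`. -/
def gaussDensity (μ : ι → ℝ) (K : Matrix ι ι ℝ) (x : ι → ℝ) : ℝ :=
  (Real.sqrt ((2 * π) ^ (Fintype.card ι) * K.det))⁻¹ *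
    Real.exp (-(dotProduct (x - μ) (K⁻¹ *ᵥ (x - μ))) / 2)

/-- Submatrix of `K` with rows and columns in the index set `G`. -/
def subm (K : Matrix ι ι ℝ) (G : Finset ι) : Matrix G G ℝ :=
  Matrix.of fun j k => K j.1 k.1

/-- Gaussian conditional mean `E(x i | x_G)` for `x ~ N(μ, K)`, as a function of `x`. -/
def condMean (μ : ι → ℝ) (K : Matrix ι ι ℝ) (i : ι) (G : Finset ι) (x : ι → ℝ) : ℝ :=
  μ i + dotProduct (fun j : G => K i j.1)
    ((subm K G)⁻¹ *ᵥ fun j : G => x j.1 - μ j.1)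

/-- Gaussian conditional variance `Var(x i | x_G)` for `x ~ N(μ, K)`
(it does not depend on the value of `x_G`). -/
def condVar (K : Matrix ι ι ℝ) (i : ι) (G : Finset ι) : ℝ :=
  K i i - dotProduct (fun j : G => K i j.1)
    ((subm K G)⁻¹ *ᵥ fun j : G => K j.1 i)

/-- Gaussian conditional covariance `Cov(x a, x b | x_G)` for `x ~ N(0, K)`. -/
def condCov (K : Matrix ι ι ℝ) (a b : ι) (G : Finset ι) : ℝ :=
  K a b - dotProduct (fun j : G => K a j.1)
    ((subm K G)⁻¹ *ᵥ fun j : G => K j.1 b)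

/-- The exact Gaussian conditional density `f(x i | x_G)` for `x ~ N(μ, K)`. -/
def condDens (μ : ι → ℝ) (K : Matrix ι ι ℝ) (i : ι) (G : Finset ι) (x : ι → ℝ) : ℝ :=
  gauss1 (condMean μ K i G x) (condVar K i G) (x i)

/-- The general Vecchia approximation `f̂(x) = ∏ i, f(x i | x_{g i})` of `N(μ, K)`. -/
def vecchia (μ : ι → ℝ) (K : Matrix ι ι ℝ) (g : ι → Finset ι) (x : ι → ℝ) : ℝ :=
  ∏ i, condDens μ K i (g i) x

/-- Kullback–Leibler divergence `KL(f ‖ g) = ∫ f log(f/g)` between densities on `ι → ℝ`. -/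
def KLdiv (f g : (ι → ℝ) → ℝ) : ℝ :=
  ∫ x : ι → ℝ, f x * Real.log (f x / g x)


/-- Covariance matrix of `x = (z_o, y)` for the latent model `y ~ N(0,K)`, `z = y + ε`,
`ε ~ N(0,D)` independent of `y`: `Sum.inl j` (for `j : ↥o`) indexes the observed response
`z j` and `Sum.inr i` (for `i : Fin n`) indexes the latent variable `y i`. -/
def rfCov {n : ℕ} (K D : Matrix (Fin n) (Fin n) ℝ) (o : Finset (Fin n)) :
    Matrix (↥o ⊕ Fin n) (↥o ⊕ Fin n) ℝ :=
  Matrix.fromBlocks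
    (Matrix.of fun j k => (K + D) j.1 k.1)
    (Matrix.of fun j i => K j.1 i)
    (Matrix.of fun i j => K i j.1)
    K

/-- The RF-ind (local kriging) conditioning sets for `x = (z_o, y)`: each observed response
`z j` conditions on previously ordered responses `z_{gz j}`, and each latent variable `y i`
conditions only on observed responses `z_{qz i}`. -/
def gInd {n : ℕ} (o : Finset (Fin n)) (gz : ↥o → Finset ↥o) (qz : Fin n → Finset ↥o) :
    ↥o ⊕ Fin n → Finset (↥o ⊕ Fin n)
  | Sum.inl j => (gz j).image Sum.inl
  | Sum.inr i => (qz i).image Sum.inl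

/-!
Every latent variable conditions only on observed responses. Hence, for fixed `z_o`, the response
factors of `f̂` do not involve `y`, and the factor of `y i` is a normal density in `y i` whose
mean depends on `z_o` alone: `f̂(z_o, ·)` is a constant times a product of one-dimensional normal
densities, and dividing by its integral removes the constant.

For the precision matrix, comparing exponents gives
`xᵀ Q x = ∑ₐ (x a - E(x a | x_{g a}))² / Var(x a | x_{g a})`. When `x` vanishes on the responses,
all conditional means vanish, so on the latent block the quadratic form is `∑ᵢ (y i)² / Var(y i | …)`
and polarization identifies that block as diagonal. The conditional variances are positive
because the joint covariance of `(z_o, y)` is positive definite.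
-/

section Gaussian

open ProbabilityTheory

variable {v : ℝ}

theorem gauss1_eq_gaussianPDFReal (μ : ℝ) (hv : 0 ≤ v) :
    gauss1 μ v = gaussianPDFReal μ ⟨v, hv⟩ :=
  rfl

theorem gauss1_pos (hv : 0 < v) (μ t : ℝ) : 0 < gauss1 μ v t := by
  rw [gauss1_eq_gaussianPDFReal μ hv.le]
  exact gaussianPDFReal_pos μ _ t (NNReal.coe_ne_zero.mp hv.ne')

theorem integral_gauss1 (hv : 0 < v) (μ : ℝ) : ∫ t, gauss1 μ v t = 1 := by
  rw [gauss1_eq_gaussianPDFReal μ hv.le]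
  exact integral_gaussianPDFReal_eq_one μ (NNReal.coe_ne_zero.mp hv.ne')

theorem integral_prod_gauss1 {κ : Type*} [Fintype κ] (m v : κ → ℝ) (hv : ∀ i, 0 < v i) :
    ∫ y : κ → ℝ, ∏ i, gauss1 (m i) (v i) (y i) = 1 := by
  rw [integral_fintype_prod_volume_eq_prod (fun i => gauss1 (m i) (v i))]
  exact Finset.prod_eq_one fun i _ => integral_gauss1 (hv i) (m i)

theorem eq_of_forall_mul_exp_eq {α : Type*} (x₀ : α) {c₁ c₂ : ℝ} {q₁ q₂ : α → ℝ}
    (hc : c₂ ≠ 0) (h₁ : q₁ x₀ = 0) (h₂ : q₂ x₀ = 0)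
    (h : ∀ x, c₁ * exp (-q₁ x / 2) = c₂ * exp (-q₂ x / 2)) (x : α) : q₁ x = q₂ x := by
  have hc₁ : c₁ = c₂ := by simpa [h₁, h₂] using h x₀
  have := exp_injective (mul_left_cancel₀ hc (hc₁ ▸ h x))
  linarith

end Gaussian

section Matrices

variable {κ : Type*}

theorem Matrix.PosDef.fromBlocks_zero₁₂_zero₂₁ {m p : Type*} [Fintype m] [Fintype p]
    {A : Matrix m m ℝ} {B : Matrix p p ℝ} (hA : A.PosDef) (hB : B.PosDef) :
    (fromBlocks A 0 0 B).PosDef := by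
  refine .of_dotProduct_mulVec_pos (hA.isHermitian.fromBlocks (by simp) hB.isHermitian)
    fun x hx => ?_
  obtain ⟨u, w, rfl⟩ : ∃ u w, x = Sum.elim u w := ⟨_, _, (Sum.elim_comp_inl_inr x).symm⟩
  simp only [fromBlocks_mulVec, Sum.elim_comp_inl, Sum.elim_comp_inr, zero_mulVec, add_zero,
    zero_add, star_trivial, sumElim_dotProduct_sumElim]
  have hA' := hA.posSemidef.dotProduct_mulVec_nonneg u
  have hB' := hB.posSemidef.dotProduct_mulVec_nonneg w
  rw [star_trivial] at hA' hB'
  rcases eq_or_ne u 0 with rfl | hu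
  · have hw : w ≠ 0 := by rintro rfl; simp at hx
    simpa using hB.dotProduct_mulVec_pos hw
  · have := hA.dotProduct_mulVec_pos hu
    rw [star_trivial] at this
    linarith

theorem Matrix.IsHermitian.apply_eq_of_dotProduct_mulVec_eq [Fintype κ] [DecidableEq κ]
    {Q : Matrix κ κ ℝ} (hQ : Q.IsHermitian) {S : Set κ} {w : κ → ℝ}
    (h : ∀ x : κ → ℝ, (∀ a ∉ S, x a = 0) → x ⬝ᵥ Q *ᵥ x = ∑ a, w a * x a ^ 2)
    {a b : κ} (ha : a ∈ S) (hb : b ∈ S) : Q a b = if a = b then w a else 0 := by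
  have hsingle : ∀ c ∈ S, ∀ (x : ℝ), ∀ d ∉ S, (Pi.single c x : κ → ℝ) d = 0 :=
    fun c hc x d hd => by rw [Pi.single_apply, if_neg (ne_of_mem_of_not_mem hc hd).symm]
  have hdiag : ∀ c ∈ S, Q c c = w c := fun c hc => by
    simpa [Pi.single_apply] using h (Pi.single c 1) (hsingle c hc 1)
  split_ifs with hab
  · exact hab ▸ hdiag a ha
  · have hba : Q b a = Q a b := by simpa using hQ.apply a b
    have hpair := h (Pi.single a 1 + Pi.single b 1) fun d hd => by
      simp [hsingle a ha 1 d hd, hsingle b hb 1 d hd]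
    have hsum : Q a a + Q b a + (Q a b + Q b b) = w a + w b := by
      simpa [add_dotProduct, dotProduct_add, mulVec_add, Pi.single_apply, add_sq, mul_add,
        Finset.sum_add_distrib, ite_pow, hab, Ne.symm hab] using hpair
    linarith [hdiag a ha, hdiag b hb]

theorem Matrix.PosDef.subm {M : Matrix κ κ ℝ} (hM : M.PosDef) (G : Finset κ) :
    (subm M G).PosDef :=
  hM.submatrix Subtype.val_injective

theorem condVar_pos [Fintype κ] [DecidableEq κ] {M : Matrix κ κ ℝ} (hM : M.PosDef) {i : κ}
    {G : Finset κ} (hi : i ∉ G) : 0 < condVar M i G := by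
  set u := (subm M G)⁻¹ *ᵥ fun j : G => M j.1 i
  have hu : subm M G *ᵥ u = fun j : G => M j.1 i := by
    rw [mulVec_mulVec, mul_nonsing_inv _ ((hM.subm G).isUnit.map detMonoidHom), one_mulVec]
  -- `condVar M i G` is the quadratic form of `M` on the coordinates `{i} ∪ G` at `(1, -u)`.
  let e := (Function.Embedding.subtype (· ∈ G)).optionElim i (by simpa using hi)
  let x : Option G → ℝ := fun a => a.elim 1 (-u)
  have hx : x ≠ 0 := fun h => one_ne_zero (congrFun h none)
  have hpos := (hM.submatrix e.injective).dotProduct_mulVec_pos hx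
  change 0 < M i i - (fun j : G => M i j) ⬝ᵥ u
  simpa [x, e, dotProduct, mulVec, Fintype.sum_option, ← congrFun hu, subm] using hpos

end Matrices

section Conditionals

variable {κ : Type*} [DecidableEq κ] {μ : κ → ℝ} {M : Matrix κ κ ℝ} {a : κ} {G : Finset κ}

theorem condMean_congr {x x' : κ → ℝ} (h : ∀ j ∈ G, x j = x' j) :
    condMean μ M a G x = condMean μ M a G x' := by
  have : (fun j : G => x j.1 - μ j.1) = fun j : G => x' j.1 - μ j.1 :=
    funext fun j => by rw [h j j.2]
  rw [condMean, condMean, this]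

theorem condMean_self : condMean μ M a G μ = μ a := by
  simp_rw [condMean, sub_self, ← Pi.zero_def, mulVec_zero, dotProduct_zero, add_zero]

theorem condDens_congr {x x' : κ → ℝ} (ha : x a = x' a) (h : ∀ j ∈ G, x j = x' j) :
    condDens μ M a G x = condDens μ M a G x' := by
  rw [condDens, condDens, ha, condMean_congr h]

variable [Fintype κ]

theorem vecchia_eq_mul_exp (μ : κ → ℝ) (M : Matrix κ κ ℝ) (g : κ → Finset κ) (x : κ → ℝ) :
    vecchia μ M g x = (∏ a, (√(2 * π * condVar M a (g a)))⁻¹) *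
      exp (-(∑ a, (x a - condMean μ M a (g a) x) ^ 2 / condVar M a (g a)) / 2) := by
  rw [vecchia, ← Finset.sum_neg_distrib, Finset.sum_div, exp_sum, ← Finset.prod_mul_distrib]
  refine Finset.prod_congr rfl fun a _ => ?_
  rw [condDens, gauss1]
  congr 2
  ring

theorem gaussDensity_zero_inv {Q : Matrix κ κ ℝ} (hQ : IsUnit Q.det) (x : κ → ℝ) :
    gaussDensity 0 Q⁻¹ x =
      (√((2 * π) ^ Fintype.card κ * Q⁻¹.det))⁻¹ * exp (-(x ⬝ᵥ Q *ᵥ x) / 2) := by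
  rw [gaussDensity, sub_zero, nonsing_inv_nonsing_inv Q hQ]

theorem vecchia_exponent_eq_of_eq_gaussDensity {g : κ → Finset κ} {Q : Matrix κ κ ℝ}
    (hQ : Q.PosDef) (h : ∀ x, vecchia 0 M g x = gaussDensity 0 Q⁻¹ x) (x : κ → ℝ) :
    ∑ a, (x a - condMean 0 M a (g a) x) ^ 2 / condVar M a (g a) = x ⬝ᵥ Q *ᵥ x := by
  have hdet : IsUnit Q.det := hQ.isUnit.map detMonoidHom
  revert x
  refine eq_of_forall_mul_exp_eq 0 ?_ ?_ ?_ fun x =>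
    (vecchia_eq_mul_exp 0 M g x).symm.trans ((h x).trans (gaussDensity_zero_inv hdet x))
  · exact inv_ne_zero (sqrt_pos.mpr (by have := hQ.inv.det_pos; positivity)).ne'
  · simp [condMean_self]
  · simp

end Conditionals

section ObservedConditioning

variable {α β : Type*} [Fintype α] [Fintype β] [DecidableEq α] [DecidableEq β]
  {M : Matrix (α ⊕ β) (α ⊕ β) ℝ} {g : α ⊕ β → Finset (α ⊕ β)}

theorem vecchia_sumElim_eq_mul_prod (μ : α ⊕ β → ℝ) (hg : ∀ a, ∀ b ∈ g a, ∃ k, b = Sum.inl k)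
    (z : α → ℝ) (y y₀ : β → ℝ) :
    vecchia μ M g (Sum.elim z y) =
      (∏ j, condDens μ M (Sum.inl j) (g (Sum.inl j)) (Sum.elim z y₀)) *
        ∏ i, gauss1 (condMean μ M (Sum.inr i) (g (Sum.inr i)) (Sum.elim z y₀))
          (condVar M (Sum.inr i) (g (Sum.inr i))) (y i) := by
  have hz : ∀ a, ∀ b ∈ g a, Sum.elim z y b = Sum.elim z y₀ b := fun a b hb => by
    obtain ⟨k, rfl⟩ := hg a b hb
    rfl
  rw [vecchia, Fintype.prod_sum_type]
  congr 1
  · exact Finset.prod_congr rfl fun j _ => condDens_congr rfl (hz _)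
  · exact Finset.prod_congr rfl fun i _ => by rw [condDens, condMean_congr (hz _)]; rfl

theorem vecchia_sumElim_div_integral (μ : α ⊕ β → ℝ) (hg : ∀ a, ∀ b ∈ g a, ∃ k, b = Sum.inl k)
    (hv : ∀ a, 0 < condVar M a (g a)) (z : α → ℝ) (y : β → ℝ) :
    vecchia μ M g (Sum.elim z y) / ∫ y', vecchia μ M g (Sum.elim z y') =
      ∏ i, condDens μ M (Sum.inr i) (g (Sum.inr i)) (Sum.elim z y) := by
  have hC : ∏ j, condDens μ M (Sum.inl j) (g (Sum.inl j)) (Sum.elim z y) ≠ 0 :=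
    Finset.prod_ne_zero_iff.mpr fun j _ => (gauss1_pos (hv _) _ _).ne'
  simp_rw [vecchia_sumElim_eq_mul_prod μ hg z _ y]
  rw [integral_const_mul, integral_prod_gauss1 _ _ fun i => hv _, mul_one,
    mul_div_cancel_left₀ _ hC]
  rfl

theorem apply_inr_inr_of_vecchia_eq_gaussDensity (hg : ∀ a, ∀ b ∈ g a, ∃ k, b = Sum.inl k)
    {Q : Matrix (α ⊕ β) (α ⊕ β) ℝ} (hQ : Q.PosDef)
    (h : ∀ x, vecchia 0 M g x = gaussDensity 0 Q⁻¹ x) (i i' : β) :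
    Q (Sum.inr i) (Sum.inr i') =
      if i = i' then (condVar M (Sum.inr i) (g (Sum.inr i)))⁻¹ else 0 := by
  have hlatent : ∀ x : α ⊕ β → ℝ, (∀ a ∉ Set.range Sum.inr, x a = 0) →
      x ⬝ᵥ Q *ᵥ x = ∑ a, (condVar M a (g a))⁻¹ * x a ^ 2 := by
    intro x hx
    rw [← vecchia_exponent_eq_of_eq_gaussDensity hQ h]
    refine Finset.sum_congr rfl fun a _ => ?_
    have hzero : ∀ b ∈ g a, x b = (0 : α ⊕ β → ℝ) b := fun b hb => by
      obtain ⟨k, rfl⟩ := hg a b hb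
      exact hx _ (by simp)
    rw [condMean_congr hzero, condMean_self, Pi.zero_apply, sub_zero, div_eq_inv_mul]
  rw [hQ.isHermitian.apply_eq_of_dotProduct_mulVec_eq hlatent ⟨i, rfl⟩ ⟨i', rfl⟩]
  simp

end ObservedConditioning

theorem rfCov_posDef {n : ℕ} {K D : Matrix (Fin n) (Fin n) ℝ} (hK : K.PosDef)
    (hDdiag : ∀ i j, i ≠ j → D i j = 0) (hDpos : ∀ i, 0 < D i i) (o : Finset (Fin n)) :
    (rfCov K D o).PosDef := by
  let P : Matrix o (Fin n) ℝ := (1 : Matrix (Fin n) (Fin n) ℝ).submatrix Subtype.val id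
  have hP {p : Type} (M : Matrix (Fin n) p ℝ) : P * M = M.submatrix Subtype.val id := by
    simpa using one_submatrix_mul Subtype.val (Equiv.refl _) M
  have hKP : K * Pᴴ = K.submatrix id Subtype.val := by
    simpa [P] using mul_submatrix_one (Equiv.refl _) Subtype.val K
  have hPKP : P * K * Pᴴ = K.submatrix Subtype.val Subtype.val := by
    rw [Matrix.mul_assoc, hKP, hP]
    rfl
  have hDo : diagonal (fun j : o => D j j) = D.submatrix Subtype.val Subtype.val := by
    ext j k
    by_cases h : j = k
    · simp [h]
    · simp [h, hDdiag _ _ (Subtype.coe_ne_coe.mpr h)]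
  -- `(z_o, y) = L (ε_o, y)`, and `(ε_o, y)` has the block-diagonal covariance `Λ`.
  let L : Matrix (o ⊕ Fin n) (o ⊕ Fin n) ℝ := fromBlocks 1 P 0 1
  let Λ : Matrix (o ⊕ Fin n) (o ⊕ Fin n) ℝ := fromBlocks (diagonal fun j => D j j) 0 0 K
  have hfac : rfCov K D o = L * Λ * star L := by
    rw [star_eq_conjTranspose, fromBlocks_conjTranspose, fromBlocks_multiply, fromBlocks_multiply]
    simp only [Matrix.mul_one, Matrix.mul_zero, Matrix.zero_mul, add_zero, zero_add,
      conjTranspose_one, conjTranspose_zero, Matrix.one_mul, hPKP, hKP, hDo, rfCov]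
    rw [hP]
    congr 1
    ext j k
    simp [add_comm]
  have hL : IsUnit L := (isUnit_iff_isUnit_det L).mpr (by simp [L])
  have hΛ : Λ.PosDef :=
    (posDef_diagonal_iff.mpr fun j : o => hDpos j).fromBlocks_zero₁₂_zero₂₁ hK
  rw [hfac]
  exact hL.posDef_star_right_conjugate_iff.mpr hΛ

theorem exists_inl_of_mem_gInd {n : ℕ} {o : Finset (Fin n)} {gz : ↥o → Finset ↥o}
    {qz : Fin n → Finset ↥o} {a b : ↥o ⊕ Fin n} (hb : b ∈ gInd o gz qz a) :
    ∃ k, b = Sum.inl k := by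
  cases a <;>
  · obtain ⟨k, -, rfl⟩ := Finset.mem_image.mp hb
    exact ⟨k, rfl⟩

theorem notMem_gInd_self {n : ℕ} {o : Finset (Fin n)} {gz : ↥o → Finset ↥o}
    (hgz : ∀ j, ∀ k ∈ gz j, k.1 < j.1) (qz : Fin n → Finset ↥o) (a : ↥o ⊕ Fin n) :
    a ∉ gInd o gz qz a := by
  intro ha
  obtain ⟨j, rfl⟩ := exists_inl_of_mem_gInd ha
  obtain ⟨k, hk, hkj⟩ := Finset.mem_image.mp ha
  exact (hgz j k hk).ne (congrArg Subtype.val (Sum.inl_injective hkj))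

/-- **RF-ind is exact local kriging.** Under the RF-ind Vecchia approximation
`f̂(x) = (∏_{i∈o} f(z i | z_{gz i})) ∏ᵢ f(y i | z_{qz i})`, the implied posterior predictive
density factorizes as `f̂(y | z_o) = ∏ᵢ f(y i | z_{qz i})`: given `z_o` the components of `y`
are independent, `y i | z_o ~ N(E(y i | z_{qz i}), Var(y i | z_{qz i}))`; and the `y`-block
of the precision matrix `Q` of `f̂` is diagonal with entries `1 / Var(y i | z_{qz i})`. -/
theorem rf_ind_is_local_kriging
    {n : ℕ} (K D : Matrix (Fin n) (Fin n) ℝ)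
    (hK : K.PosDef) (hDdiag : ∀ i j, i ≠ j → D i j = 0) (hDpos : ∀ i, 0 < D i i)
    (o : Finset (Fin n))
    (gz : ↥o → Finset ↥o) (hgz : ∀ j, ∀ k ∈ gz j, k.1 < j.1)
    (qz : Fin n → Finset ↥o) :
    (∀ (zv : ↥o → ℝ) (yv : Fin n → ℝ),
        vecchia 0 (rfCov K D o) (gInd o gz qz) (Sum.elim zv yv) /
            (∫ yw : Fin n → ℝ, vecchia 0 (rfCov K D o) (gInd o gz qz) (Sum.elim zv yw)) =
          ∏ i : Fin n,
            condDens 0 (rfCov K D o) (Sum.inr i) ((qz i).image Sum.inl) (Sum.elim zv yv)) ∧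
      ∀ Q : Matrix (↥o ⊕ Fin n) (↥o ⊕ Fin n) ℝ, Q.PosDef →
        (∀ x, vecchia 0 (rfCov K D o) (gInd o gz qz) x = gaussDensity 0 Q⁻¹ x) →
        ∀ i i' : Fin n,
          Q (Sum.inr i) (Sum.inr i') =
            if i = i' then (condVar (rfCov K D o) (Sum.inr i) ((qz i).image Sum.inl))⁻¹
            else 0 := by
  have hg : ∀ a, ∀ b ∈ gInd o gz qz a, ∃ k, b = Sum.inl k := fun _ _ => exists_inl_of_mem_gInd
  have hv : ∀ a, 0 < condVar (rfCov K D o) a (gInd o gz qz a) := fun a =>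
    condVar_pos (rfCov_posDef hK hDdiag hDpos o) (notMem_gInd_self hgz qz a)
  exact ⟨vecchia_sumElim_div_integral 0 hg hv, fun Q hQ h =>
    apply_inr_inr_of_vecchia_eq_gaussDensity hg hQ h⟩
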